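/- Let m > 0 and define V_v = (1/2)(m s² + Σᵢ (k̂ᵢ - k*ᵢ)²) over i = 0,1,2. Suppose m s' = F + ε with F = -Λ s - (k̂₀ + k̂₁ a₁ + k̂₂ a₂) sgn(s), |ε| ≤ k*₀ + k*₁ a₁ + k*₂ a₂ with a₁, a₂ ≥ 0, and the adaptation laws k̂₀' = |s| - α₀ k̂₀, k̂₁' = |s| a₁ - α₁ k̂₁, k̂₂' = |s| a₂ - α₂ k̂₂ hold, with Λ, α₀, α₁, α₂ > 0 and k̂ᵢ ≥ 0. Then V_v' ≤ -Λ s² + Σᵢ αᵢ (k̂ᵢ k*ᵢ - k̂ᵢ²). -/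
import Mathlib


/-- Main Lyapunov derivative computation for the force control loop. -/
theorem force_loop_lyapunov_derivative
    (m Λ α₀ α₁ α₂ K₀ K₁ K₂ : ℝ)
    (s k0 k1 k2 a₁ a₂ ε F : ℝ → ℝ) (s' : ℝ → ℝ) (t : ℝ)
    (hm : 0 < m) (hΛ : 0 < Λ) (hα₀ : 0 < α₀) (hα₁ : 0 < α₁) (hα₂ : 0 < α₂)
    (ha₁ : 0 ≤ a₁ t) (ha₂ : 0 ≤ a₂ t)
    (hk0 : 0 ≤ k0 t) (hk1 : 0 ≤ k1 t) (hk2 : 0 ≤ k2 t)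
    (hεb : |ε t| ≤ K₀ + K₁ * a₁ t + K₂ * a₂ t)
    (hs : HasDerivAt s (s' t) t)
    (hdyn : m * s' t = F t + ε t)
    (hF : F t = -Λ * s t - (k0 t + k1 t * a₁ t + k2 t * a₂ t) * Real.sign (s t))
    (hk0' : HasDerivAt k0 (|s t| - α₀ * k0 t) t)
    (hk1' : HasDerivAt k1 (|s t| * a₁ t - α₁ * k1 t) t)
    (hk2' : HasDerivAt k2 (|s t| * a₂ t - α₂ * k2 t) t)
    (Vv : ℝ → ℝ)
    (hVv : Vv = fun τ => (1/2) * (m * (s τ) ^ 2 + (k0 τ - K₀) ^ 2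
        + (k1 τ - K₁) ^ 2 + (k2 τ - K₂) ^ 2)) :
    deriv Vv t ≤ -Λ * (s t) ^ 2
      + α₀ * (k0 t * K₀ - (k0 t) ^ 2)
      + α₁ * (k1 t * K₁ - (k1 t) ^ 2)
      + α₂ * (k2 t * K₂ - (k2 t) ^ 2) := by
  subst hVv
  have hV : HasDerivAt (fun τ => (1/2) * (m * (s τ) ^ 2 + (k0 τ - K₀) ^ 2
        + (k1 τ - K₁) ^ 2 + (k2 τ - K₂) ^ 2))
      ((1/2) * (m * ((2 : ℕ) * s t ^ 1 * s' t)
        + (2 : ℕ) * (k0 t - K₀) ^ 1 * (|s t| - α₀ * k0 t)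
        + (2 : ℕ) * (k1 t - K₁) ^ 1 * (|s t| * a₁ t - α₁ * k1 t)
        + (2 : ℕ) * (k2 t - K₂) ^ 1 * (|s t| * a₂ t - α₂ * k2 t))) t :=
    ((((hs.pow 2).const_mul m).add ((hk0'.sub_const K₀).pow 2)).add
      ((hk1'.sub_const K₁).pow 2)).add ((hk2'.sub_const K₂).pow 2) |>.const_mul (1/2)
  rw [hV.deriv]
  have habs : s t * Real.sign (s t) = |s t| := by
    rcases lt_trichotomy (s t) 0 with h | h | h
    · rw [Real.sign_of_neg h, abs_of_neg h]; ring
    · simp [h]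
    · rw [Real.sign_of_pos h, abs_of_pos h]; ring
  have hsε : s t * ε t ≤ |s t| * (K₀ + K₁ * a₁ t + K₂ * a₂ t) := by
    calc s t * ε t ≤ |s t * ε t| := le_abs_self _
      _ = |s t| * |ε t| := abs_mul _ _
      _ ≤ |s t| * (K₀ + K₁ * a₁ t + K₂ * a₂ t) :=
          mul_le_mul_of_nonneg_left hεb (abs_nonneg _)
  rw [hF] at hdyn
  have hss : m * (s t * s' t) = -Λ * s t ^ 2
      - (k0 t + k1 t * a₁ t + k2 t * a₂ t) * |s t| + s t * ε t := by
    linear_combination s t * hdyn - (k0 t + k1 t * a₁ t + k2 t * a₂ t) * habs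
  nlinarith [hsε, hss, abs_nonneg (s t)]
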